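/- Let L and Δ be n×n real symmetric matrices. Let λ₁ ≤ … ≤ λ_n be the eigenvalues of L with corresponding orthonormal eigenvectors u₁,…,u_n, and let μ₁ ≤ … ≤ μ_n be the eigenvalues of L + Δ, all counted with multiplicity. Fix 0 ≤ τ < n and a real constant c. If xᵀΔx ≥ c·‖x‖² for every x in span{u_{τ+1},…,u_n}, then μ_k ≥ λ_k + c for every k > τ. -/

import Mathlib

open scoped RealInnerProductSpace

/-!
Courant–Fischer with two complementary test spaces. The span `U` of the eigenvectors
`u_k, …, u_n` of `L` and the span `V` of the eigenvectors `v_1, …, v_k` of `L + Δ` have dimensions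
`n - k + 1` and `k`, so they share a nonzero vector `x`. On `U` the Rayleigh quotient of `L` is at
least `λ_k` and, when `k > τ`, that of `Δ` is at least `c`; on `V` the Rayleigh quotient of
`L + Δ` is at most `μ_k`. Evaluating at `x` gives `λ_k + c ≤ μ_k`.
-/

theorem Submodule.inf_ne_bot_of_finrank_lt_add {K V : Type*} [DivisionRing K] [AddCommGroup V]
    [Module K V] [FiniteDimensional K V] {s t : Submodule K V}
    (hst : Module.finrank K V < Module.finrank K s + Module.finrank K t) : s ⊓ t ≠ ⊥ :=
  fun h => hst.not_ge (Submodule.finrank_add_finrank_le_of_disjoint (disjoint_iff.2 h))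

theorem LinearIndependent.finrank_span_image_finset {K V ι : Type*} [DivisionRing K]
    [AddCommGroup V] [Module K V] {v : ι → V} (hv : LinearIndependent K v) (s : Finset ι) :
    Module.finrank K (Submodule.span K (v '' s)) = s.card := by
  rw [Set.image_eq_range]
  exact (finrank_span_eq_card (hv.comp _ Subtype.val_injective)).trans (by simp)

namespace Orthonormal

variable {ι E : Type*} [NormedAddCommGroup E] [InnerProductSpace ℝ E]
  {b : ι → E} {T : E →ₗ[ℝ] E} {lam : ι → ℝ}

theorem norm_sum_smul_sq [Fintype ι] (hb : Orthonormal ℝ b) (a : ι → ℝ) :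
    ‖∑ i, a i • b i‖ ^ 2 = ∑ i, a i ^ 2 := by
  rw [← real_inner_self_eq_norm_sq, hb.inner_sum]
  simp [sq]

theorem inner_map_sum_smul [Fintype ι] (hb : Orthonormal ℝ b)
    (hT : ∀ i, T (b i) = lam i • b i) (a : ι → ℝ) :
    ⟪∑ i, a i • b i, T (∑ i, a i • b i)⟫ = ∑ i, lam i * a i ^ 2 := by
  have hTa : T (∑ i, a i • b i) = ∑ i, (lam i * a i) • b i := by
    simp only [map_sum, map_smul, hT, smul_smul, mul_comm]
  rw [hTa, hb.inner_sum]
  exact Finset.sum_congr rfl fun i _ => by rw [conj_trivial]; ring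

theorem mul_norm_sq_le_inner_map_of_mem_span (hb : Orthonormal ℝ b)
    (hT : ∀ i, T (b i) = lam i • b i) {s : Set ι} {m : ℝ} (hm : ∀ i ∈ s, m ≤ lam i) {x : E}
    (hx : x ∈ Submodule.span ℝ (b '' s)) : m * ‖x‖ ^ 2 ≤ ⟪x, T x⟫ := by
  obtain ⟨t, hts, a, rfl⟩ := (Submodule.mem_span_image_iff_exists_fun ℝ).1 hx
  have hbt : Orthonormal ℝ fun i : t => b i := hb.comp _ Subtype.val_injective
  rw [hbt.norm_sum_smul_sq, hbt.inner_map_sum_smul (fun i => hT i), Finset.mul_sum]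
  exact Finset.sum_le_sum fun i _ =>
    mul_le_mul_of_nonneg_right (hm i (hts i.2)) (sq_nonneg _)

theorem inner_map_le_mul_norm_sq_of_mem_span (hb : Orthonormal ℝ b)
    (hT : ∀ i, T (b i) = lam i • b i) {s : Set ι} {M : ℝ} (hM : ∀ i ∈ s, lam i ≤ M) {x : E}
    (hx : x ∈ Submodule.span ℝ (b '' s)) : ⟪x, T x⟫ ≤ M * ‖x‖ ^ 2 := by
  obtain ⟨t, hts, a, rfl⟩ := (Submodule.mem_span_image_iff_exists_fun ℝ).1 hx
  have hbt : Orthonormal ℝ fun i : t => b i := hb.comp _ Subtype.val_injective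
  rw [hbt.norm_sum_smul_sq, hbt.inner_map_sum_smul (fun i => hT i), Finset.mul_sum]
  exact Finset.sum_le_sum fun i _ =>
    mul_le_mul_of_nonneg_right (hM i (hts i.2)) (sq_nonneg _)

end Orthonormal

theorem eigenvalue_add_le_of_lower_bound_on_span_Ici {n : ℕ} {E : Type*}
    [NormedAddCommGroup E] [InnerProductSpace ℝ E] [FiniteDimensional ℝ E]
    (hE : Module.finrank ℝ E ≤ n) {T S : E →ₗ[ℝ] E} {lam mu : Fin n → ℝ}
    (hlam : Monotone lam) (hmu : Monotone mu) {u v : Fin n → E}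
    (hu : Orthonormal ℝ u) (hTu : ∀ i, T (u i) = lam i • u i)
    (hv : Orthonormal ℝ v) (hTSv : ∀ i, (T + S) (v i) = mu i • v i) {c : ℝ} (k : Fin n)
    (hS : ∀ x ∈ Submodule.span ℝ (u '' Set.Ici k), c * ‖x‖ ^ 2 ≤ ⟪x, S x⟫) :
    lam k + c ≤ mu k := by
  have hUV : Submodule.span ℝ (u '' Set.Ici k) ⊓ Submodule.span ℝ (v '' Set.Iic k) ≠ ⊥ := by
    refine Submodule.inf_ne_bot_of_finrank_lt_add ?_
    rw [← Finset.coe_Ici, ← Finset.coe_Iic, hu.linearIndependent.finrank_span_image_finset,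
      hv.linearIndependent.finrank_span_image_finset, Fin.card_Ici, Fin.card_Iic]
    omega
  obtain ⟨x, ⟨hxU, hxV⟩, hx⟩ := (Submodule.ne_bot_iff _).1 hUV
  have hTx := hu.mul_norm_sq_le_inner_map_of_mem_span hTu (fun i hi => hlam hi) hxU
  have hTSx := hv.inner_map_le_mul_norm_sq_of_mem_span hTSv (fun i hi => hmu hi) hxV
  rw [LinearMap.add_apply, inner_add_right] at hTSx
  have hx2 : 0 < ‖x‖ ^ 2 := by positivity
  nlinarith [hS x hxU]

theorem stmt5_general (n τ : ℕ)
    (L Δ : Matrix (Fin n) (Fin n) ℝ)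
    (lam mu : Fin n → ℝ) (hlam : Monotone lam) (hmu : Monotone mu)
    (u : Fin n → EuclideanSpace ℝ (Fin n)) (hu : Orthonormal ℝ u)
    (hLu : ∀ i, Matrix.toEuclideanLin L (u i) = lam i • u i)
    (v : Fin n → EuclideanSpace ℝ (Fin n)) (hv : Orthonormal ℝ v)
    (hMv : ∀ i, Matrix.toEuclideanLin (L + Δ) (v i) = mu i • v i)
    (c : ℝ)
    (hquad : ∀ x ∈ Submodule.span ℝ (u '' {i : Fin n | τ ≤ (i : ℕ)}),
      c * ‖x‖ ^ 2 ≤ ⟪x, Matrix.toEuclideanLin Δ x⟫) :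
    ∀ k : Fin n, τ ≤ (k : ℕ) → lam k + c ≤ mu k := by
  intro k hk
  refine eigenvalue_add_le_of_lower_bound_on_span_Ici finrank_euclideanSpace_fin.le hlam hmu
    hu hLu hv (by simpa only [map_add] using hMv) k fun x hx => hquad x ?_
  exact Submodule.span_mono (Set.image_mono fun i (hi : k ≤ i) => hk.trans hi) hx

/-- (High-pass band lift, Courant–Fischer.) Let `L, Δ` be real symmetric
`n×n` matrices, with eigenvalues `λ₁ ≤ … ≤ λ_n` of `L` (orthonormal eigenvectors `u₁,…,u_n`) and
`μ₁ ≤ … ≤ μ_n` of `L + Δ`, all with multiplicity. If `xᵀΔx ≥ c‖x‖²` for every `x` in the span of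
the last `n − τ` eigenvectors of `L`, then `μ_k ≥ λ_k + c` for every `k > τ`. -/
theorem stmt5 (n τ : ℕ) (hτn : τ < n)
    (L Δ : Matrix (Fin n) (Fin n) ℝ) (hL : L.IsSymm) (hΔ : Δ.IsSymm)
    (lam mu : Fin n → ℝ) (hlam : Monotone lam) (hmu : Monotone mu)
    (u : Fin n → EuclideanSpace ℝ (Fin n)) (hu : Orthonormal ℝ u)
    (hLu : ∀ i, Matrix.toEuclideanLin L (u i) = lam i • u i)
    (v : Fin n → EuclideanSpace ℝ (Fin n)) (hv : Orthonormal ℝ v)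
    (hMv : ∀ i, Matrix.toEuclideanLin (L + Δ) (v i) = mu i • v i)
    (c : ℝ)
    (hquad : ∀ x ∈ Submodule.span ℝ (u '' {i : Fin n | τ ≤ (i : ℕ)}),
      c * ‖x‖ ^ 2 ≤ ⟪x, Matrix.toEuclideanLin Δ x⟫) :
    ∀ k : Fin n, τ ≤ (k : ℕ) → lam k + c ≤ mu k :=
  stmt5_general n τ L Δ lam mu hlam hmu u hu hLu v hv hMv c hquad
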